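/- In a system S under a deployable communication architecture Com, the set of distributively-enabled interactions at any configuration c equals the set of globally enabled interactions at c. -/

import Mathlib

/-- `Visible uses Com σ j`: interaction `σ` is visible by component `j`. -/
def Visible {ι Alph : Type*} (uses : ι → Alph → Prop) (Com : ι → ι → Prop)
    (σ : Alph) (j : ι) : Prop :=
  ∀ i, uses i σ → Com i j

/-- Deployability of a communication architecture `Com`: self-transmission,
group transmission, and existing-priority transmission. -/
def Deployable {ι Alph : Type*} (uses : ι → Alph → Prop)
    (prec : Alph → Alph → Prop) (Com : ι → ι → Prop) : Prop :=
  (∀ i, Com i i) ∧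
  (∀ σ i j, uses i σ → uses j σ → Com i j ∧ Com j i) ∧
  (∀ σ τ i j, prec σ τ → uses j σ → uses i τ → Com i j)

/-- Joint participation of `σ` at configuration `c`: every participating
component has a `σ`-labeled transition with a true guard. -/
def JointPart {ι Alph Config : Type*} (uses : ι → Alph → Prop)
    (hasTrans : Config → ι → Alph → Prop) (c : Config) (σ : Alph) : Prop :=
  ∀ i, uses i σ → hasTrans c i σ

/-- `σ` is globally enabled at `c`. -/
def GloballyEnabled {ι Alph Config : Type*} (uses : ι → Alph → Prop)
    (prec : Alph → Alph → Prop) (hasTrans : Config → ι → Alph → Prop)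
    (c : Config) (σ : Alph) : Prop :=
  JointPart uses hasTrans c σ ∧ ¬ ∃ τ, prec σ τ ∧ JointPart uses hasTrans c τ

/-- `σ` is distributively-enabled at `c` under architecture `Com`. -/
def DistEnabled {ι Alph Config : Type*} (uses : ι → Alph → Prop)
    (prec : Alph → Alph → Prop) (Com : ι → ι → Prop)
    (hasTrans : Config → ι → Alph → Prop) (c : Config) (σ : Alph) : Prop :=
  (∀ i, uses i σ → Visible uses Com σ i ∧ hasTrans c i σ) ∧
  (∀ τ, prec σ τ → (∀ i, uses i σ → Visible uses Com τ i) →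
    ∃ j, uses j τ ∧ ¬ hasTrans c j τ)

/-! Existing-priority transmission makes every `τ` with `σ ≺ τ` visible to all participants
of `σ`, so the priority check of distributed enabledness, which only inspects the visible
higher-priority interactions, inspects all of them; group transmission makes `σ` visible to
its own participants, so the visibility requirement on `σ` holds automatically. -/

section Enabledness

variable {ι Alph Config : Type*} {uses : ι → Alph → Prop} {prec : Alph → Alph → Prop}
  {Com : ι → ι → Prop} {hasTrans : Config → ι → Alph → Prop} {c : Config} {σ : Alph}

theorem not_jointPart_iff {τ : Alph} :
    ¬ JointPart uses hasTrans c τ ↔ ∃ j, uses j τ ∧ ¬ hasTrans c j τ := by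
  simp only [JointPart, not_forall, exists_prop]

theorem Deployable.visible_of_uses (hdep : Deployable uses prec Com) {i : ι}
    (hi : uses i σ) : Visible uses Com σ i :=
  fun _ hk => (hdep.2.1 σ _ i hk hi).1

theorem Deployable.visible_of_prec (hdep : Deployable uses prec Com) {τ : Alph}
    (hστ : prec σ τ) {i : ι} (hi : uses i σ) : Visible uses Com τ i :=
  fun _ hk => hdep.2.2 σ τ _ i hστ hi hk

theorem DistEnabled.globallyEnabled (h : DistEnabled uses prec Com hasTrans c σ)
    (hvis : ∀ τ, prec σ τ → ∀ i, uses i σ → Visible uses Com τ i) :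
    GloballyEnabled uses prec hasTrans c σ := by
  refine ⟨fun i hi => (h.1 i hi).2, ?_⟩
  rintro ⟨τ, hστ, hτ⟩
  exact not_jointPart_iff.2 (h.2 τ hστ (hvis τ hστ)) hτ

theorem GloballyEnabled.distEnabled (h : GloballyEnabled uses prec hasTrans c σ)
    (hvis : ∀ i, uses i σ → Visible uses Com σ i) :
    DistEnabled uses prec Com hasTrans c σ :=
  ⟨fun i hi => ⟨hvis i hi, h.1 i hi⟩,
    fun τ hστ _ => not_jointPart_iff.1 fun hτ => h.2 ⟨τ, hστ, hτ⟩⟩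

end Enabledness

/-- Under a deployable communication architecture, the set of
distributively-enabled interactions at any configuration equals the set of
globally enabled interactions. -/
theorem stmt_4 {ι Alph Config : Type*}
    (uses : ι → Alph → Prop) (prec : Alph → Alph → Prop)
    (Com : ι → ι → Prop) (hasTrans : Config → ι → Alph → Prop)
    (hdep : Deployable uses prec Com)
    (c : Config) :
    {σ | DistEnabled uses prec Com hasTrans c σ} =
      {σ | GloballyEnabled uses prec hasTrans c σ} := by
  ext σ
  exact ⟨fun h => h.globallyEnabled fun _ hστ _ => hdep.visible_of_prec hστ,
    fun h => h.distEnabled fun _ => hdep.visible_of_uses⟩
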